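/- arXiv:2306.10207 — 2 statements merged into one kernel-verified Lean document; each statement's English description precedes it below -/
import Mathlib

section
/- Let $1<p<N$, $p<q<p^*=Np/(N-p)$, $\gamma_q=N(q-p)/(pq)$, and let $a,b,c>0$ with $0<\gamma_q q<p$. Define $h(t)=\frac{1}{p}t^p - \frac{b}{p^*}t^{p^*} - c\, t^{\gamma_q q}$ for $t>0$. If $\sup_{t>0}\left(\frac{1}{p}t^{p-\gamma_q q}-\frac{b}{p^*}t^{p^*-\gamma_q q}\right) > c$, then $h$ has exactly two zeros $0<R_0<R_1$, satisfies $h(t)>0$ if and only if $t\in(R_0,R_1)$, and $h$ has exactly two critical points in $(0,\infty)$: a strict local minimum point in $(0,R_0)$ with negative value and a strict global maximum point in $(R_0,R_1)$ with positive value. -/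
open Real Set Filter


lemma key_lemma (A B C α β : ℝ) (hA : 0 < A) (hB : 0 < B) (hC : 0 < C)
    (hα : 0 < α) (hαβ : α < β)
    (f : ℝ → ℝ) (hf : f = fun t => A * t ^ α - B * t ^ β - C)
    (hpos : ∃ t > (0:ℝ), 0 < f t) :
    ∃ r0 r1 : ℝ, 0 < r0 ∧ r0 < r1 ∧ f r0 = 0 ∧ f r1 = 0 ∧
      (∀ t, 0 < t → (0 < f t ↔ r0 < t ∧ t < r1)) ∧
      (∀ t, 0 < t → (f t = 0 ↔ t = r0 ∨ t = r1)) ∧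
      (∀ t, 0 < t → (f t < 0 ↔ t < r0 ∨ r1 < t)) := by
  have hβ : 0 < β := hα.trans hαβ
  have hba : 0 < β - α := by linarith
  have hcont : Continuous f := by
    simp only [hf]
    exact ((continuous_const.mul (Real.continuous_rpow_const hα.le)).sub
      (continuous_const.mul (Real.continuous_rpow_const hβ.le))).sub continuous_const
  have hder : ∀ t : ℝ, 0 < t →
      HasDerivAt f (A * (α * t ^ (α - 1)) - B * (β * t ^ (β - 1))) t := by
    intro t ht
    simp only [hf]
    exact (((Real.hasDerivAt_rpow_const (Or.inl ht.ne')).const_mul A).sub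
      ((Real.hasDerivAt_rpow_const (Or.inl ht.ne')).const_mul B)).sub_const C
  set T : ℝ := (A * α / (B * β)) ^ (1 / (β - α)) with hTdef
  have hTbase : 0 < A * α / (B * β) := by positivity
  have hT : 0 < T := Real.rpow_pos_of_pos hTbase _
  have hTpow : T ^ (β - α) = A * α / (B * β) := by
    rw [hTdef, ← Real.rpow_mul hTbase.le, one_div, inv_mul_cancel₀ hba.ne', Real.rpow_one]
  have hderiv_pos : ∀ t ∈ Ioo (0:ℝ) T, 0 < deriv f t := by
    intro t ⟨ht, htT⟩
    rw [(hder t ht).deriv]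
    have h1 : t ^ (β - α) < T ^ (β - α) := Real.rpow_lt_rpow ht.le htT hba
    rw [hTpow] at h1
    have h2 : B * β * t ^ (β - α) < A * α := by
      have := (lt_div_iff₀ (show (0:ℝ) < B * β by positivity)).mp h1
      linarith [mul_comm (t ^ (β - α)) (B * β)]
    have h3 : t ^ (β - 1) = t ^ (β - α) * t ^ (α - 1) := by
      rw [← Real.rpow_add ht]; ring_nf
    have h4 : (0:ℝ) < t ^ (α - 1) := Real.rpow_pos_of_pos ht _
    have h5 : (0:ℝ) < (A * α - B * β * t ^ (β - α)) * t ^ (α - 1) :=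
      mul_pos (by linarith) h4
    calc (0:ℝ) < (A * α - B * β * t ^ (β - α)) * t ^ (α - 1) := h5
      _ = A * (α * t ^ (α - 1)) - B * (β * t ^ (β - 1)) := by rw [h3]; ring
  have hderiv_neg : ∀ t ∈ Ioi T, deriv f t < 0 := by
    intro t (htT : T < t)
    have ht : 0 < t := hT.trans htT
    rw [(hder t ht).deriv]
    have h1 : T ^ (β - α) < t ^ (β - α) := Real.rpow_lt_rpow hT.le htT hba
    rw [hTpow] at h1
    have h2 : A * α < B * β * t ^ (β - α) := by
      have := (div_lt_iff₀ (show (0:ℝ) < B * β by positivity)).mp h1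
      linarith [mul_comm (t ^ (β - α)) (B * β)]
    have h3 : t ^ (β - 1) = t ^ (β - α) * t ^ (α - 1) := by
      rw [← Real.rpow_add ht]; ring_nf
    have h4 : (0:ℝ) < t ^ (α - 1) := Real.rpow_pos_of_pos ht _
    have h5 : A * (α * t ^ (α - 1)) - B * (β * t ^ (β - 1))
        = (A * α - B * β * t ^ (β - α)) * t ^ (α - 1) := by rw [h3]; ring
    rw [h5]
    exact mul_neg_of_neg_of_pos (by linarith) h4
  have hmono : StrictMonoOn f (Icc 0 T) := by
    apply strictMonoOn_of_deriv_pos (convex_Icc 0 T) hcont.continuousOn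
    rwa [interior_Icc]
  have hanti : StrictAntiOn f (Ici T) := by
    apply strictAntiOn_of_deriv_neg (convex_Ici T) hcont.continuousOn
    rwa [interior_Ici]
  have hf0 : f 0 = -C := by
    rw [hf]; simp [Real.zero_rpow hα.ne', Real.zero_rpow hβ.ne']
  have hfT : 0 < f T := by
    obtain ⟨t0, ht0, hft0⟩ := hpos
    rcases le_or_gt t0 T with h1 | h1
    · exact lt_of_lt_of_le hft0 (hmono.monotoneOn ⟨ht0.le, h1⟩ ⟨hT.le, le_refl T⟩ h1)
    · exact lt_of_lt_of_le hft0 (hanti.antitoneOn self_mem_Ici h1.le h1.le)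
  obtain ⟨r0, hr0mem, hr0⟩ : ∃ r0 ∈ Icc (0:ℝ) T, f r0 = 0 := by
    have h0 : (0:ℝ) ∈ Icc (f 0) (f T) := ⟨by rw [hf0]; linarith, hfT.le⟩
    obtain ⟨r0, hmem, hval⟩ := intermediate_value_Icc hT.le hcont.continuousOn h0
    exact ⟨r0, hmem, hval⟩
  have hr0pos : 0 < r0 := by
    rcases hr0mem.1.lt_or_eq with h | h
    · exact h
    · exfalso; rw [← h, hf0] at hr0; linarith
  have hr0T : r0 < T := by
    rcases hr0mem.2.lt_or_eq with h | h
    · exact h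
    · exfalso; rw [← h, hr0] at hfT; linarith
  obtain ⟨M, hMT, hfM⟩ : ∃ M, T < M ∧ f M < 0 := by
    set M0 : ℝ := (A / B + 1) ^ (1 / (β - α)) with hM0def
    have hM0base : (0:ℝ) < A / B + 1 := by positivity
    have hM0 : 0 < M0 := Real.rpow_pos_of_pos hM0base _
    set M : ℝ := max (T + 1) M0 with hMdef
    have hM : T < M := lt_of_lt_of_le (by linarith) (le_max_left _ _)
    have hMpos : 0 < M := hT.trans hM
    have hMpow : A / B + 1 ≤ M ^ (β - α) := by
      have hM0pow : M0 ^ (β - α) = A / B + 1 := by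
        rw [hM0def, ← Real.rpow_mul hM0base.le, one_div, inv_mul_cancel₀ hba.ne',
          Real.rpow_one]
      rw [← hM0pow]
      exact Real.rpow_le_rpow hM0.le (le_max_right _ _) hba.le
    refine ⟨M, hM, ?_⟩
    have h3 : M ^ β = M ^ (β - α) * M ^ α := by
      rw [← Real.rpow_add hMpos]; ring_nf
    have h4 : (0:ℝ) < M ^ α := Real.rpow_pos_of_pos hMpos _
    have h5 : A < B * M ^ (β - α) := by
      have h6 : B * (A / B + 1) ≤ B * M ^ (β - α) :=
        mul_le_mul_of_nonneg_left hMpow hB.le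
      have hBA : B * (A / B + 1) = A + B := by field_simp
      linarith
    simp only [hf]
    have h7 : A * M ^ α - B * M ^ β - C
        = (A - B * M ^ (β - α)) * M ^ α - C := by rw [h3]; ring
    rw [h7]
    have h8 : (A - B * M ^ (β - α)) * M ^ α < 0 := mul_neg_of_neg_of_pos (by linarith) h4
    linarith
  obtain ⟨r1, hr1mem, hr1⟩ : ∃ r1 ∈ Icc T M, f r1 = 0 := by
    have h0 : (0:ℝ) ∈ Icc (f M) (f T) := ⟨hfM.le, hfT.le⟩
    obtain ⟨r1, hmem, hval⟩ := intermediate_value_Icc' hMT.le hcont.continuousOn h0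
    exact ⟨r1, hmem, hval⟩
  have hr1T : T < r1 := by
    rcases hr1mem.1.lt_or_eq with h | h
    · exact h
    · exfalso; rw [h, hr1] at hfT; exact lt_irrefl 0 hfT
  have hr01 : r0 < r1 := hr0T.trans hr1T
  have hposchar : ∀ t, 0 < t → (0 < f t ↔ r0 < t ∧ t < r1) := by
    intro t ht
    constructor
    · intro hft
      constructor
      · by_contra hcon
        push_neg at hcon
        have h1 : f t ≤ f r0 :=
          hmono.monotoneOn ⟨ht.le, hcon.trans hr0T.le⟩ ⟨hr0pos.le, hr0T.le⟩ hcon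
        rw [hr0] at h1; linarith
      · by_contra hcon
        push_neg at hcon
        have h1 : f t ≤ f r1 := hanti.antitoneOn hr1T.le (hr1T.le.trans hcon) hcon
        rw [hr1] at h1; linarith
    · rintro ⟨h1, h2⟩
      rcases le_or_gt t T with hcase | hcase
      · have h3 : f r0 < f t := hmono ⟨hr0pos.le, hr0T.le⟩ ⟨ht.le, hcase⟩ h1
        rw [hr0] at h3; linarith
      · have h3 : f r1 < f t := hanti hcase.le hr1T.le h2
        rw [hr1] at h3; linarith
  have hzerochar : ∀ t, 0 < t → (f t = 0 ↔ t = r0 ∨ t = r1) := by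
    intro t ht
    constructor
    · intro hft
      rcases le_or_gt t T with hcase | hcase
      · exact Or.inl (hmono.injOn ⟨ht.le, hcase⟩ ⟨hr0pos.le, hr0T.le⟩ (by rw [hft, hr0]))
      · exact Or.inr (hanti.injOn hcase.le hr1T.le (by rw [hft, hr1]))
    · rintro (rfl | rfl)
      · exact hr0
      · exact hr1
  refine ⟨r0, r1, hr0pos, hr01, hr0, hr1, hposchar, hzerochar, ?_⟩
  intro t ht
  constructor
  · intro hft
    by_contra hcon
    push_neg at hcon
    obtain ⟨h1, h2⟩ := hcon
    rcases h1.lt_or_eq with h1' | h1'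
    · rcases h2.lt_or_eq with h2' | h2'
      · have := (hposchar t ht).mpr ⟨h1', h2'⟩; linarith
      · have := (hzerochar t ht).mpr (Or.inr h2'); linarith
    · have := (hzerochar t ht).mpr (Or.inl h1'.symm); linarith
  · rintro (h1 | h1)
    · have h3 : f t < f r0 := hmono ⟨ht.le, (h1.trans hr0T).le⟩ ⟨hr0pos.le, hr0T.le⟩ h1
      rw [hr0] at h3; linarith
    · have h3 : f t < f r1 := hanti hr1T.le ((hr1T.trans h1).le) h1
      rw [hr1] at h3; linarith

/-- Lemma 4.1 (scalar version): the truncation function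
`h(t) = t^p/p - b t^{p*}/p* - c t^{γ_q q}` has exactly two zeros `R₀ < R₁`,
is positive exactly on `(R₀, R₁)`, and has exactly two critical points in
`(0,∞)`: a strict local minimum in `(0,R₀)` with negative value and a strict
global maximum in `(R₀,R₁)` with positive value. -/
theorem stmt_0 (N p q pstar γ a b c : ℝ)
    (hp : 1 < p) (hpN : p < N)
    (hpstar : pstar = N * p / (N - p))
    (hq1 : p < q) (hq2 : q < pstar)
    (hγ : γ = N * (q - p) / (p * q))
    (ha : 0 < a) (hb : 0 < b) (hc : 0 < c)
    (hγq1 : 0 < γ * q) (hγq2 : γ * q < p)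
    (h : ℝ → ℝ)
    (hdef : ∀ t : ℝ, h t = (1 / p) * t ^ p - (b / pstar) * t ^ pstar - c * t ^ (γ * q))
    (hsup : ∃ t > (0 : ℝ),
      c < (1 / p) * t ^ (p - γ * q) - (b / pstar) * t ^ (pstar - γ * q)) :
    ∃ R0 R1 : ℝ, 0 < R0 ∧ R0 < R1 ∧ h R0 = 0 ∧ h R1 = 0 ∧
      (∀ t > (0 : ℝ), h t = 0 → t = R0 ∨ t = R1) ∧
      (∀ t > (0 : ℝ), (0 < h t ↔ R0 < t ∧ t < R1)) ∧
      ∃ t1 t2 : ℝ, 0 < t1 ∧ t1 < R0 ∧ R0 < t2 ∧ t2 < R1 ∧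
        (∀ t > (0 : ℝ), (deriv h t = 0 ↔ t = t1 ∨ t = t2)) ∧
        (∀ᶠ s in nhdsWithin t1 {t1}ᶜ, h t1 < h s) ∧ h t1 < 0 ∧
        (∀ t > (0 : ℝ), t ≠ t2 → h t < h t2) ∧ 0 < h t2 := by
  have hppos : 0 < p := by linarith
  have hppstar : p < pstar := hq1.trans hq2
  have hpstarpos : 0 < pstar := by linarith
  have hα : 0 < p - γ * q := by linarith
  have hαβ : p - γ * q < pstar - γ * q := by linarith
  -- φ : the zero-shape function
  obtain ⟨R0, R1, hR0pos, hR01, hφR0, hφR1, hφpos, hφzero, hφneg⟩ :=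
    key_lemma (1/p) (b/pstar) c (p - γ*q) (pstar - γ*q) (by positivity) (by positivity)
      hc hα hαβ
      (fun t => (1/p) * t ^ (p - γ*q) - (b/pstar) * t ^ (pstar - γ*q) - c) rfl
      (by obtain ⟨t0, ht0, hs⟩ := hsup; exact ⟨t0, ht0, by linarith⟩)
  have hR1pos : 0 < R1 := hR0pos.trans hR01
  -- link h with φ
  have hhφ : ∀ t : ℝ, 0 < t → h t = t ^ (γ*q) *
      ((1/p) * t ^ (p - γ*q) - (b/pstar) * t ^ (pstar - γ*q) - c) := by
    intro t ht
    have e1 : t ^ p = t ^ (γ*q) * t ^ (p - γ*q) := by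
      rw [← Real.rpow_add ht]; ring_nf
    have e2 : t ^ pstar = t ^ (γ*q) * t ^ (pstar - γ*q) := by
      rw [← Real.rpow_add ht]; ring_nf
    rw [hdef t, e1, e2]; ring
  have hhpos : ∀ t : ℝ, 0 < t → (0 < h t ↔
      0 < (1/p) * t ^ (p - γ*q) - (b/pstar) * t ^ (pstar - γ*q) - c) := by
    intro t ht
    have hpow : (0:ℝ) < t ^ (γ*q) := Real.rpow_pos_of_pos ht _
    rw [hhφ t ht]
    constructor
    · intro h1; nlinarith
    · intro h1; exact mul_pos hpow h1
  have hhneg : ∀ t : ℝ, 0 < t → ((1/p) * t ^ (p - γ*q) - (b/pstar) * t ^ (pstar - γ*q) - c < 0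
      → h t < 0) := by
    intro t ht h1
    have hpow : (0:ℝ) < t ^ (γ*q) := Real.rpow_pos_of_pos ht _
    rw [hhφ t ht]
    exact mul_neg_of_pos_of_neg hpow h1
  have hhzero : ∀ t : ℝ, 0 < t → (h t = 0 ↔
      (1/p) * t ^ (p - γ*q) - (b/pstar) * t ^ (pstar - γ*q) - c = 0) := by
    intro t ht
    have hpow : (t:ℝ) ^ (γ*q) ≠ 0 := (Real.rpow_pos_of_pos ht _).ne'
    rw [hhφ t ht, mul_eq_zero]
    simp [hpow]
  -- continuity and derivative of h
  have hh : h = fun t => (1 / p) * t ^ p - (b / pstar) * t ^ pstar - c * t ^ (γ * q) :=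
    funext hdef
  have hconth : Continuous h := by
    rw [hh]
    exact ((continuous_const.mul (Real.continuous_rpow_const hppos.le)).sub
      (continuous_const.mul (Real.continuous_rpow_const hpstarpos.le))).sub
      (continuous_const.mul (Real.continuous_rpow_const hγq1.le))
  have hDer : ∀ t : ℝ, 0 < t → HasDerivAt h
      (t ^ (p-1) - b * t ^ (pstar-1) - c * ((γ*q) * t ^ (γ*q-1))) t := by
    intro t ht
    have H : HasDerivAt h ((1/p) * (p * t ^ (p-1)) - (b/pstar) * (pstar * t ^ (pstar-1))
        - c * ((γ*q) * t ^ (γ*q-1))) t := by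
      rw [hh]
      exact (((Real.hasDerivAt_rpow_const (Or.inl ht.ne')).const_mul (1/p)).sub
        ((Real.hasDerivAt_rpow_const (Or.inl ht.ne')).const_mul (b/pstar))).sub
        ((Real.hasDerivAt_rpow_const (Or.inl ht.ne')).const_mul c)
    convert H using 1
    field_simp
  have hDχ : ∀ t : ℝ, 0 < t →
      t ^ (p-1) - b * t ^ (pstar-1) - c * ((γ*q) * t ^ (γ*q-1))
        = t ^ (γ*q-1) * (1 * t ^ (p - γ*q) - b * t ^ (pstar - γ*q) - c * (γ*q)) := by
    intro t ht
    have e1 : t ^ (p-1) = t ^ (γ*q-1) * t ^ (p - γ*q) := by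
      rw [← Real.rpow_add ht]; ring_nf
    have e2 : t ^ (pstar-1) = t ^ (γ*q-1) * t ^ (pstar - γ*q) := by
      rw [← Real.rpow_add ht]; ring_nf
    rw [e1, e2]; ring
  -- positivity point for χ via the mean value theorem
  set m : ℝ := (R0 + R1) / 2 with hmdef
  have hm1 : R0 < m := by rw [hmdef]; linarith
  have hm2 : m < R1 := by rw [hmdef]; linarith
  have hmpos : 0 < m := hR0pos.trans hm1
  have hhm : 0 < h m := (hhpos m hmpos).mpr ((hφpos m hmpos).mpr ⟨hm1, hm2⟩)
  have hhR0 : h R0 = 0 := (hhzero R0 hR0pos).mpr hφR0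
  have hhR1 : h R1 = 0 := (hhzero R1 hR1pos).mpr hφR1
  have hχexists : ∃ t > (0:ℝ),
      0 < (fun t => 1 * t ^ (p - γ*q) - b * t ^ (pstar - γ*q) - c * (γ*q)) t := by
    obtain ⟨ξ, hξmem, hξ⟩ := exists_hasDerivAt_eq_slope h
      (fun t => t ^ (p-1) - b * t ^ (pstar-1) - c * ((γ*q) * t ^ (γ*q-1))) hm1
      hconth.continuousOn
      (fun x hx => hDer x (hR0pos.trans hx.1))
    have hξpos : 0 < ξ := hR0pos.trans hξmem.1
    have hslope : 0 < (h m - h R0) / (m - R0) := by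
      rw [hhR0]
      apply div_pos (by linarith) (by linarith)
    rw [← hξ] at hslope
    rw [hDχ ξ hξpos] at hslope
    have hpow : (0:ℝ) < ξ ^ (γ*q-1) := Real.rpow_pos_of_pos hξpos _
    refine ⟨ξ, hξpos, ?_⟩
    dsimp only
    nlinarith
  obtain ⟨t1, t2, ht1pos, ht1t2, hχt1, hχt2, hχpos, hχzero, hχneg⟩ :=
    key_lemma 1 b (c * (γ*q)) (p - γ*q) (pstar - γ*q) one_pos hb (by positivity) hα hαβ
      (fun t => 1 * t ^ (p - γ*q) - b * t ^ (pstar - γ*q) - c * (γ*q)) rfl hχexists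
  have ht2pos : 0 < t2 := ht1pos.trans ht1t2
  -- monotonicity of h
  have hAnti1 : StrictAntiOn h (Icc 0 t1) := by
    apply strictAntiOn_of_deriv_neg (convex_Icc 0 t1) hconth.continuousOn
    intro x hx
    rw [interior_Icc] at hx
    obtain ⟨hx1, hx2⟩ := hx
    rw [(hDer x hx1).deriv, hDχ x hx1]
    exact mul_neg_of_pos_of_neg (Real.rpow_pos_of_pos hx1 _)
      ((hχneg x hx1).mpr (Or.inl hx2))
  have hMono : StrictMonoOn h (Icc t1 t2) := by
    apply strictMonoOn_of_deriv_pos (convex_Icc t1 t2) hconth.continuousOn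
    intro x hx
    rw [interior_Icc] at hx
    obtain ⟨hx1, hx2⟩ := hx
    have hx0 : 0 < x := ht1pos.trans hx1
    rw [(hDer x hx0).deriv, hDχ x hx0]
    exact mul_pos (Real.rpow_pos_of_pos hx0 _) ((hχpos x hx0).mpr ⟨hx1, hx2⟩)
  have hAnti2 : StrictAntiOn h (Ici t2) := by
    apply strictAntiOn_of_deriv_neg (convex_Ici t2) hconth.continuousOn
    intro x hx
    rw [interior_Ici] at hx
    have hx0 : 0 < x := ht2pos.trans hx
    rw [(hDer x hx0).deriv, hDχ x hx0]
    exact mul_neg_of_pos_of_neg (Real.rpow_pos_of_pos hx0 _)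
      ((hχneg x hx0).mpr (Or.inr hx))
  have hh0 : h 0 = 0 := by
    rw [hdef 0]
    simp [Real.zero_rpow hppos.ne', Real.zero_rpow hpstarpos.ne', Real.zero_rpow hγq1.ne']
  -- t1 < R0
  have ht1R0 : t1 < R0 := by
    by_contra hcon
    push_neg at hcon
    have hs : h (R0/2) < 0 :=
      hhneg (R0/2) (by linarith) ((hφneg (R0/2) (by linarith)).mpr (Or.inl (by linarith)))
    have h1 : h R0 < h (R0/2) :=
      hAnti1 ⟨by linarith, by linarith⟩ ⟨hR0pos.le, hcon⟩ (by linarith)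
    rw [hhR0] at h1
    linarith
  have hht1neg : h t1 < 0 :=
    hhneg t1 ht1pos ((hφneg t1 ht1pos).mpr (Or.inl ht1R0))
  -- h t2 is positive
  have hmt1 : t1 < m := by linarith
  have hht2pos : 0 < h t2 := by
    rcases le_or_gt m t2 with hcase | hcase
    · have := hMono.monotoneOn ⟨hmt1.le, hcase⟩ ⟨ht1t2.le, le_refl t2⟩ hcase
      linarith
    · have := hAnti2.antitoneOn self_mem_Ici hcase.le hcase.le
      linarith
  have hR0t2 : R0 < t2 ∧ t2 < R1 := (hφpos t2 ht2pos).mp ((hhpos t2 ht2pos).mp hht2pos)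
  -- global max
  have hmax : ∀ t, 0 < t → t ≠ t2 → h t < h t2 := by
    intro t ht hne
    rcases le_or_gt t t1 with hcase | hcase
    · have h1 : h t < h 0 := hAnti1 ⟨le_refl 0, ht1pos.le⟩ ⟨ht.le, hcase⟩ ht
      rw [hh0] at h1
      linarith
    · rcases lt_or_ge t t2 with hcase2 | hcase2
      · exact hMono ⟨hcase.le, hcase2.le⟩ ⟨ht1t2.le, le_refl t2⟩ hcase2
      · have ht2t : t2 < t := lt_of_le_of_ne hcase2 (Ne.symm hne)
        exact hAnti2 self_mem_Ici ht2t.le ht2t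
  -- local min
  have hlocmin : ∀ᶠ s in nhdsWithin t1 {t1}ᶜ, h t1 < h s := by
    have hmem : Ioo (0:ℝ) t2 ∈ nhdsWithin t1 ({t1}ᶜ : Set ℝ) :=
      mem_nhdsWithin_of_mem_nhds (isOpen_Ioo.mem_nhds ⟨ht1pos, ht1t2⟩)
    filter_upwards [hmem, self_mem_nhdsWithin] with s hs hs'
    have hsne : s ≠ t1 := hs'
    rcases lt_or_gt_of_ne hsne with h1 | h1
    · exact hAnti1 ⟨hs.1.le, h1.le⟩ ⟨ht1pos.le, le_refl t1⟩ h1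
    · exact hMono ⟨le_refl t1, ht1t2.le⟩ ⟨h1.le, hs.2.le⟩ h1
  refine ⟨R0, R1, hR0pos, hR01, hhR0, hhR1, ?_, ?_, t1, t2, ht1pos, ht1R0,
    hR0t2.1, hR0t2.2, ?_, hlocmin, hht1neg, fun t ht hne => hmax t ht hne, hht2pos⟩
  · intro t ht hz
    exact (hφzero t ht).mp ((hhzero t ht).mp hz)
  · intro t ht
    exact (hhpos t ht).trans (hφpos t ht)
  · intro t ht
    rw [(hDer t ht).deriv, hDχ t ht, mul_eq_zero]
    have hpow : (t:ℝ) ^ (γ*q-1) ≠ 0 := (Real.rpow_pos_of_pos ht _).ne'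
    simp only [hpow, false_or]
    exact hχzero t ht
end

section
/- Let $1<p<N$, $p<q<p^*$, $\gamma_q=\frac{N(q-p)}{pq}$, $S>0$, $\mu>0$, $C(q)>0$. For $c>0$ define $\varphi_c(t)=\frac{1}{p}t^{p-\gamma_q q} - \frac{S^{-p^*/p}}{p^*}t^{p^*-\gamma_q q} - \frac{\mu}{q}C(q)c^{(1-\gamma_q)q}$ for $t>0$, and assume $0<\gamma_q q<p$. Suppose $c_1>0$ and $t_1>0$ satisfy $\varphi_{c_1}(t_1)\ge 0$. Then for every $c_2\in(0,c_1]$ and every $t\in\left[\frac{c_2}{c_1}t_1,\ t_1\right]$, one has $\varphi_{c_2}(t)\ge 0$. -/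
open Real Set

/-- Lemma 4.10: if `φ_{c₁}(t₁) ≥ 0` then `φ_{c₂}(t) ≥ 0` for all
`c₂ ∈ (0, c₁]` and `t ∈ [(c₂/c₁) t₁, t₁]`, where
`φ_c(t) = t^{p-γ_q q}/p - S^{-p*/p} t^{p*-γ_q q}/p* - (μ/q) C(q) c^{(1-γ_q)q}`. -/
theorem stmt_7 (N p q pstar γ S μ Cq : ℝ)
    (hp : 1 < p) (hpN : p < N)
    (hpstar : pstar = N * p / (N - p))
    (hq1 : p < q) (hq2 : q < pstar)
    (hγ : γ = N * (q - p) / (p * q))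
    (hS : 0 < S) (hμ : 0 < μ) (hCq : 0 < Cq)
    (hγq1 : 0 < γ * q) (hγq2 : γ * q < p)
    (φ : ℝ → ℝ → ℝ)
    (hφ : ∀ c t : ℝ, φ c t =
      (1 / p) * t ^ (p - γ * q) - (S ^ (-(pstar / p)) / pstar) * t ^ (pstar - γ * q)
        - (μ / q) * Cq * c ^ ((1 - γ) * q))
    (c1 t1 : ℝ) (hc1 : 0 < c1) (ht1 : 0 < t1) (hφ1 : 0 ≤ φ c1 t1) :
    ∀ c2 : ℝ, c2 ∈ Ioc 0 c1 → ∀ t : ℝ, t ∈ Icc ((c2 / c1) * t1) t1 → 0 ≤ φ c2 t := by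
  intro c2 hc2 t ht
  obtain ⟨hc2pos, hc2le⟩ := hc2
  obtain ⟨htl, htr⟩ := ht
  have hp0 : (0:ℝ) < p := by linarith
  have hps0 : (0:ℝ) < pstar := by linarith
  have ha0 : 0 < p - γ * q := by linarith
  have hab : p - γ * q ≤ pstar - γ * q := by linarith
  set θ := c2 / c1 with hθ
  have hθ0 : 0 < θ := div_pos hc2pos hc1
  have hθ1 : θ ≤ 1 := (div_le_one hc1).mpr hc2le
  have ht0 : 0 < t := lt_of_lt_of_le (mul_pos hθ0 ht1) htl
  set s := t / t1 with hs
  have hs0 : 0 < s := div_pos ht0 ht1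
  have hs1 : s ≤ 1 := (div_le_one ht1).mpr htr
  have hθs : θ ≤ s := (le_div_iff₀ ht1).mpr htl
  have hts : t = s * t1 := by rw [hs, div_mul_cancel₀ t ht1.ne']
  have hc2eq : c2 = θ * c1 := by rw [hθ, div_mul_cancel₀ c2 hc1.ne']
  have hK0 : 0 < (μ / q) * Cq := mul_pos (div_pos hμ (by linarith)) hCq
  have hB0 : 0 ≤ S ^ (-(pstar / p)) / pstar :=
    div_nonneg (rpow_nonneg hS.le _) hps0.le
  rw [hφ, hts, hc2eq]
  rw [hφ] at hφ1
  rw [mul_rpow hs0.le ht1.le, mul_rpow hs0.le ht1.le, mul_rpow hθ0.le hc1.le]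
  have hsa_pos : 0 < s ^ (p - γ * q) := rpow_pos_of_pos hs0 _
  have hba : s ^ (pstar - γ * q) ≤ s ^ (p - γ * q) :=
    rpow_le_rpow_of_exponent_ge hs0 hs1 hab
  have haq : p - γ * q ≤ (1 - γ) * q := by nlinarith
  have hθa : θ ^ ((1 - γ) * q) ≤ s ^ (p - γ * q) :=
    le_trans (rpow_le_rpow_of_exponent_ge hθ0 hθ1 haq)
      (rpow_le_rpow hθ0.le hθs ha0.le)
  have h1 : (S ^ (-(pstar / p)) / pstar) * (s ^ (pstar - γ * q) * t1 ^ (pstar - γ * q))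
      ≤ (S ^ (-(pstar / p)) / pstar) * (s ^ (p - γ * q) * t1 ^ (pstar - γ * q)) :=
    mul_le_mul_of_nonneg_left
      (mul_le_mul_of_nonneg_right hba (rpow_nonneg ht1.le _)) hB0
  have h2 : (μ / q) * Cq * (θ ^ ((1 - γ) * q) * c1 ^ ((1 - γ) * q))
      ≤ (μ / q) * Cq * (s ^ (p - γ * q) * c1 ^ ((1 - γ) * q)) :=
    mul_le_mul_of_nonneg_left
      (mul_le_mul_of_nonneg_right hθa (rpow_nonneg hc1.le _)) hK0.le
  nlinarith [mul_nonneg hsa_pos.le hφ1]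
end
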